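/- Let P ∈ ℝ^{3×3} be symmetric, let J = diag(J₁,J₂,J₃) with J₁,J₂,J₃ > 0, let k_R, k_ω > 0, and let D = diag(2ζ₁Ω₁, 2ζ₂Ω₂, 2ζ₃Ω₃), K = diag(Ω₁², Ω₂², Ω₃²) with ζᵢ, Ωᵢ > 0. Let R_e : ℝ → SO(3), e_ω : ℝ → ℝ³ be differentiable and M_e : ℝ → ℝ³ be twice differentiable, satisfying the error dynamics Ṙ_e = R_e ê_ω, J ė_ω = −k_R e_R(R_e) − k_ω e_ω + M_e, and M̈_e + D Ṁ_e + K M_e = 0. Then the Lyapunov function V(t) = k_R ψ(R_e(t)) + ½ e_ω(t)ᵀ J e_ω(t) + ½ M_e(t)ᵀ K M_e(t) + ½ ‖Ṁ_e(t)‖² satisfies dV/dt = −e_ω(t)ᵀ( k_ω e_ω(t) − M_e(t) ) − Ṁ_e(t)ᵀ D Ṁ_e(t) for all t. -/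

import Mathlib

open Matrix

attribute [local instance] Matrix.normedAddCommGroup Matrix.normedSpace

/-- The hat map sending `v ∈ ℝ³` to the skew-symmetric matrix `v̂` with `v̂ w = v × w`. -/
def hat (v : Fin 3 → ℝ) : Matrix (Fin 3) (Fin 3) ℝ :=
  !![0, -v 2, v 1; v 2, 0, -v 0; -v 1, v 0, 0]

/-- `SO(3)`: real 3×3 matrices with `RᵀR = I` and `det R = 1`. -/
def SO3 : Set (Matrix (Fin 3) (Fin 3) ℝ) := {R | Rᵀ * R = 1 ∧ R.det = 1}

/-- The vee map, inverse of the hat map on skew-symmetric matrices. -/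
def vee (A : Matrix (Fin 3) (Fin 3) ℝ) : Fin 3 → ℝ :=
  ![A 2 1, A 0 2, A 1 0]

/-- The configuration error function `ψ(R) = ½ tr(P(I − R))`. -/
noncomputable def ψ (P R : Matrix (Fin 3) (Fin 3) ℝ) : ℝ :=
  (1 / 2 : ℝ) * (P * (1 - R)).trace

/-- The attitude error vector `e_R(R) = vee(½(PR − RᵀP))`. -/
noncomputable def eR (P R : Matrix (Fin 3) (Fin 3) ℝ) : Fin 3 → ℝ :=
  vee ((1 / 2 : ℝ) • (P * R - Rᵀ * P))

/-!
Differentiate `V` term by term. For any `A`, the trace of `A ê_ω` only sees the skew part of `A`,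
so along `Ṙ_e = R_e ê_ω` and for symmetric `P` the rate of `ψ(R_e)` is `e_R · e_ω`; symmetry of `J`
and `K` makes each quadratic term contribute `xᵀ A ẋ`. Substituting the two error dynamics, the
`k_R e_R · e_ω` and `Ṁ_eᵀ K M_e` terms cancel.
-/

theorem Matrix.IsSymm.dotProduct_mulVec_comm {R n : Type*} [CommSemiring R] [Fintype n]
    {A : Matrix n n R} (hA : A.IsSymm) (x y : n → R) : x ⬝ᵥ A *ᵥ y = y ⬝ᵥ A *ᵥ x := by
  rw [dotProduct_mulVec, ← mulVec_transpose, hA.eq, dotProduct_comm]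

section Calculus

variable {𝕜 n : Type*} [NontriviallyNormedField 𝕜] [Fintype n] {t : 𝕜}

theorem HasDerivAt.dotProduct {x y : 𝕜 → n → 𝕜} {x' y' : n → 𝕜}
    (hx : HasDerivAt x x' t) (hy : HasDerivAt y y' t) :
    HasDerivAt (fun s => x s ⬝ᵥ y s) (x' ⬝ᵥ y t + x t ⬝ᵥ y') t := by
  refine (HasDerivAt.fun_sum (u := Finset.univ) (A := fun i s => x s i * y s i) fun i _ =>
    (hasDerivAt_pi.1 hx i).mul (hasDerivAt_pi.1 hy i)).congr_deriv ?_
  rw [Finset.sum_add_distrib]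
  rfl

theorem HasDerivAt.mulVec {m : Type*} (A : Matrix m n 𝕜) {x : 𝕜 → n → 𝕜} {x' : n → 𝕜}
    (hx : HasDerivAt x x' t) : HasDerivAt (fun s => A *ᵥ x s) (A *ᵥ x') t :=
  hasDerivAt_pi.2 fun i =>
    ((hasDerivAt_const t fun j => A i j).dotProduct hx).congr_deriv (by simp [Matrix.mulVec])

theorem HasDerivAt.dotProduct_mulVec_self {A : Matrix n n 𝕜} (hA : A.IsSymm)
    {x : 𝕜 → n → 𝕜} {x' : n → 𝕜} (hx : HasDerivAt x x' t) :
    HasDerivAt (fun s => x s ⬝ᵥ (A *ᵥ x s)) (2 * (x' ⬝ᵥ (A *ᵥ x t))) t := by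
  refine (hx.dotProduct (hx.mulVec A)).congr_deriv ?_
  rw [hA.dotProduct_mulVec_comm (x t), dotProduct_comm, two_mul]

theorem HasDerivAt.trace_mul_left [CompleteSpace 𝕜] (P : Matrix n n 𝕜) {R : 𝕜 → Matrix n n 𝕜}
    {R' : Matrix n n 𝕜} (hR : HasDerivAt R R' t) :
    HasDerivAt (fun s => (P * R s).trace) (P * R').trace t :=
  ((traceLinearMap n 𝕜 𝕜).comp (LinearMap.mulLeft 𝕜 P)).toContinuousLinearMap.hasFDerivAt
    |>.comp_hasDerivAt t hR

end Calculus

theorem vee_smul (c : ℝ) (A : Matrix (Fin 3) (Fin 3) ℝ) : vee (c • A) = c • vee A := by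
  ext i
  fin_cases i <;> rfl

theorem trace_mul_hat (A : Matrix (Fin 3) (Fin 3) ℝ) (ω : Fin 3 → ℝ) :
    (A * hat ω).trace = -(vee (A - Aᵀ) ⬝ᵥ ω) := by
  simp only [trace, hat, vee, dotProduct, diag_apply, mul_apply, of_apply, Matrix.sub_apply,
    transpose_apply, Fin.sum_univ_three, cons_val', cons_val_fin_one, cons_val_zero, cons_val_one,
    cons_val, Fin.isValue]
  ring

theorem hasDerivAt_ψ {P : Matrix (Fin 3) (Fin 3) ℝ} (hP : P.IsSymm)
    {R : ℝ → Matrix (Fin 3) (Fin 3) ℝ} {ω : Fin 3 → ℝ} {t : ℝ}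
    (hR : HasDerivAt R (R t * hat ω) t) :
    HasDerivAt (fun s => ψ P (R s)) (eR P (R t) ⬝ᵥ ω) t := by
  have hψ : (fun s => ψ P (R s)) = fun s => 1 / 2 * (P.trace - (P * R s).trace) := by
    funext s
    rw [ψ, Matrix.mul_sub, Matrix.mul_one, trace_sub]
  rw [hψ]
  refine (((hasDerivAt_const t P.trace).sub (hR.trace_mul_left P)).const_mul _).congr_deriv ?_
  rw [← Matrix.mul_assoc, trace_mul_hat, eR, transpose_mul, hP.eq, vee_smul, smul_dotProduct,
    smul_eq_mul]
  ring

theorem lyapunov_derivative_full_error_dynamics_general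
    (P : Matrix (Fin 3) (Fin 3) ℝ) (hPsymm : P.IsSymm)
    (J₁ J₂ J₃ : ℝ) (kR kω : ℝ) (Ω₁ Ω₂ Ω₃ : ℝ)
    (J D K : Matrix (Fin 3) (Fin 3) ℝ)
    (hJ : J = Matrix.diagonal ![J₁, J₂, J₃])
    (hK : K = Matrix.diagonal ![Ω₁ ^ 2, Ω₂ ^ 2, Ω₃ ^ 2])
    (Re : ℝ → Matrix (Fin 3) (Fin 3) ℝ) (eω eω' Me Me' Me'' : ℝ → Fin 3 → ℝ)
    (hRe : ∀ t, HasDerivAt Re (Re t * hat (eω t)) t)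
    (heω : ∀ t, HasDerivAt eω (eω' t) t)
    (hMe : ∀ t, HasDerivAt Me (Me' t) t)
    (hMe' : ∀ t, HasDerivAt Me' (Me'' t) t)
    (hdyn : ∀ t, J *ᵥ eω' t = -(kR • eR P (Re t)) - kω • eω t + Me t)
    (hMdyn : ∀ t, Me'' t + D *ᵥ Me' t + K *ᵥ Me t = 0) :
    ∀ t, HasDerivAt
      (fun s => kR * ψ P (Re s) + (1 / 2 : ℝ) * (eω s ⬝ᵥ (J *ᵥ eω s))
        + (1 / 2 : ℝ) * (Me s ⬝ᵥ (K *ᵥ Me s)) + (1 / 2 : ℝ) * (Me' s ⬝ᵥ Me' s))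
      (-(eω t ⬝ᵥ (kω • eω t - Me t)) - Me' t ⬝ᵥ (D *ᵥ Me' t)) t := by
  intro t
  have hJsymm : J.IsSymm := hJ ▸ isSymm_diagonal _
  have hKsymm : K.IsSymm := hK ▸ isSymm_diagonal _
  have hV := ((((hasDerivAt_ψ hPsymm (hRe t)).const_mul kR).add
    (((heω t).dotProduct_mulVec_self hJsymm).const_mul (1 / 2 : ℝ))).add
    (((hMe t).dotProduct_mulVec_self hKsymm).const_mul (1 / 2 : ℝ))).add
    (((hMe' t).dotProduct (hMe' t)).const_mul (1 / 2 : ℝ))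
  refine hV.congr_deriv ?_
  have hω := congrArg (eω t ⬝ᵥ ·) (hdyn t)
  have hM := congrArg (Me' t ⬝ᵥ ·) (hMdyn t)
  simp only [dotProduct_add, dotProduct_sub, dotProduct_neg, dotProduct_smul, smul_eq_mul,
    dotProduct_zero] at hω hM ⊢
  rw [dotProduct_comm (eR P (Re t)), dotProduct_comm (Me'' t), hJsymm.dotProduct_mulVec_comm]
  linear_combination hω + hM

/-- Lyapunov derivative identity for the full error dynamics: along
`Ṙ_e = R_e ê_ω`, `J ė_ω = −k_R e_R(R_e) − k_ω e_ω + M_e`, `M̈_e + D Ṁ_e + K M_e = 0`,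
the Lyapunov function `V = k_R ψ(R_e) + ½ e_ωᵀ J e_ω + ½ M_eᵀ K M_e + ½ ‖Ṁ_e‖²`
satisfies `V̇ = −e_ωᵀ(k_ω e_ω − M_e) − Ṁ_eᵀ D Ṁ_e`. -/
theorem lyapunov_derivative_full_error_dynamics
    (P : Matrix (Fin 3) (Fin 3) ℝ) (hPsymm : P.IsSymm)
    (J₁ J₂ J₃ : ℝ) (hJ₁ : 0 < J₁) (hJ₂ : 0 < J₂) (hJ₃ : 0 < J₃)
    (kR kω : ℝ) (hkR : 0 < kR) (hkω : 0 < kω)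
    (ζ₁ ζ₂ ζ₃ Ω₁ Ω₂ Ω₃ : ℝ)
    (hζ₁ : 0 < ζ₁) (hζ₂ : 0 < ζ₂) (hζ₃ : 0 < ζ₃)
    (hΩ₁ : 0 < Ω₁) (hΩ₂ : 0 < Ω₂) (hΩ₃ : 0 < Ω₃)
    (J D K : Matrix (Fin 3) (Fin 3) ℝ)
    (hJ : J = Matrix.diagonal ![J₁, J₂, J₃])
    (hD : D = Matrix.diagonal ![2 * ζ₁ * Ω₁, 2 * ζ₂ * Ω₂, 2 * ζ₃ * Ω₃])
    (hK : K = Matrix.diagonal ![Ω₁ ^ 2, Ω₂ ^ 2, Ω₃ ^ 2])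
    (Re : ℝ → Matrix (Fin 3) (Fin 3) ℝ) (eω eω' Me Me' Me'' : ℝ → Fin 3 → ℝ)
    (hReSO3 : ∀ t, Re t ∈ SO3)
    (hRe : ∀ t, HasDerivAt Re (Re t * hat (eω t)) t)
    (heω : ∀ t, HasDerivAt eω (eω' t) t)
    (hMe : ∀ t, HasDerivAt Me (Me' t) t)
    (hMe' : ∀ t, HasDerivAt Me' (Me'' t) t)
    (hdyn : ∀ t, J *ᵥ eω' t = -(kR • eR P (Re t)) - kω • eω t + Me t)
    (hMdyn : ∀ t, Me'' t + D *ᵥ Me' t + K *ᵥ Me t = 0) :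
    ∀ t, HasDerivAt
      (fun s => kR * ψ P (Re s) + (1 / 2 : ℝ) * (eω s ⬝ᵥ (J *ᵥ eω s))
        + (1 / 2 : ℝ) * (Me s ⬝ᵥ (K *ᵥ Me s)) + (1 / 2 : ℝ) * (Me' s ⬝ᵥ Me' s))
      (-(eω t ⬝ᵥ (kω • eω t - Me t)) - Me' t ⬝ᵥ (D *ᵥ Me' t)) t :=
  lyapunov_derivative_full_error_dynamics_general P hPsymm J₁ J₂ J₃ kR kω Ω₁ Ω₂ Ω₃ J D K hJ hK Re eω
    eω' Me Me' Me'' hRe heω hMe hMe' hdyn hMdyn
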